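/- arXiv:1004.2087 — 2 statements merged into one kernel-verified Lean document; each statement's English description precedes it below -/
import Mathlib

section
/- Let R be a commutative ring with elements e, e', a, a', b, b' satisfying e^2 = 1, e'^2 = 1, b = e*a, b' = e'*a', (e' - e)*a' = 0, (e' - e)*a = 0, a*a = a*a', and (e*e' - 1)*a*a = 0. Then the relations a'*b = a*b' = a*b, b*b = b*b', and a*a = a*a' all hold in R. -/
theorem stmt_1 {R : Type*} [CommRing R] (e e' a a' b b' : R)
    (he : e ^ 2 = 1) (he' : e' ^ 2 = 1)
    (hb : b = e * a) (hb' : b' = e' * a')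
    (h1 : (e' - e) * a' = 0) (h2 : (e' - e) * a = 0)
    (h3 : a * a = a * a') (h4 : (e * e' - 1) * a * a = 0) :
    a' * b = a * b' ∧ a * b' = a * b ∧ b * b = b * b' ∧ a * a = a * a' := by
  refine ⟨?_, ?_, ?_, h3⟩
  · linear_combination a' * hb - a * hb' - a * h1
  · linear_combination a * hb' - a * hb + a * h2 - e' * h3
  · linear_combination (b + e * a) * hb - b * hb' - e' * a' * hb + a * a * he + e * e' * h3 - h4
end

section
/- Let R be a commutative ring with elements e, e', a, a', b, b' satisfying e^2 = 1, e'^2 = 1, b = e*a, b' = e'*a', (e' - e)*a = 0, (e' - e)*a' = 0, a*a = a*a', and (e*e' - 1)*a*a = 0. Then the following nine equalities hold, expressing that the two orders of resolving two adjacent crossings of mixed type (Case A) agree: e'*e' = e'*e', e'*a' = e*a', e'*b' = e*b', a'*e = a'*e', a'*a = a*a', a'*b = a*b', b'*e = b'*e', b'*a = b*a', b'*b = b*b'. -/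
theorem stmt_12 {R : Type*} [CommRing R] (e e' a a' b b' : R)
    (he : e ^ 2 = 1) (he' : e' ^ 2 = 1)
    (hb : b = e * a) (hb' : b' = e' * a')
    (h1 : (e' - e) * a = 0) (h2 : (e' - e) * a' = 0)
    (h3 : a * a = a * a') (h4 : (e * e' - 1) * a * a = 0) :
    e' * e' = e' * e' ∧ e' * a' = e * a' ∧ e' * b' = e * b' ∧
    a' * e = a' * e' ∧ a' * a = a * a' ∧ a' * b = a * b' ∧
    b' * e = b' * e' ∧ b' * a = b * a' ∧ b' * b = b * b' := by
  subst hb hb'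
  refine ⟨rfl, by linear_combination h2,
    by linear_combination a' * he' - a' * he - e * h2,
    by linear_combination -h2, by ring,
    by linear_combination -a * h2,
    by linear_combination -e' * h2,
    by linear_combination a * h2,
    by ring⟩
end
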